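/- arXiv:2509.13550 — 7 statements merged into one kernel-verified Lean document; each statement's English description precedes it below -/
import Mathlib

section
/- Let L > 0, t ≥ 1, and let α_0, ..., α_{t-1} be real numbers with 0 ≤ α_k ≤ 1/L for all k. Then the maximum over ζ ∈ [0, L] of ζ · ∏_{k=0}^{t-1}(1 - α_k ζ) is at least L/(4(t+1)). -/
/-!
Evaluate at the small step `ζ = L / (2 (t + 1))`. Every factor `1 - α_k ζ` is then at least
`1 - c` with `c = 1 / (2 (t + 1))`, so by Bernoulli's inequality the product is at least
`1 - t c ≥ 1 / 2`, and `ζ / 2 = L / (4 (t + 1))`.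
-/

open Finset

theorem one_sub_card_mul_le_prod_one_sub {ι : Type*} (s : Finset ι) {a : ι → ℝ} {c : ℝ}
    (hc : c ≤ 1) (ha : ∀ i ∈ s, a i ≤ c) :
    1 - #s * c ≤ ∏ i ∈ s, (1 - a i) :=
  calc 1 - #s * c = 1 + #s * (-c) := by ring
    _ ≤ (1 + -c) ^ #s := one_add_mul_le_pow (by linarith) _
    _ = ∏ _i ∈ s, (1 - c) := by rw [prod_const, ← sub_eq_add_neg]
    _ ≤ ∏ i ∈ s, (1 - a i) :=
      prod_le_prod (fun _ _ => by linarith) fun i hi => by linarith [ha i hi]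

theorem one_sub_card_mul_div_le_prod_one_sub_mul {ι : Type*} [Fintype ι] {L ζ : ℝ}
    (hL : 0 < L) (hζ : ζ ∈ Set.Icc 0 L) {α : ι → ℝ} (hα : ∀ k, α k ≤ 1 / L) :
    1 - Fintype.card ι * (ζ / L) ≤ ∏ k, (1 - α k * ζ) := by
  refine one_sub_card_mul_le_prod_one_sub univ ((div_le_one hL).2 hζ.2) fun k _ => ?_
  calc α k * ζ ≤ 1 / L * ζ := mul_le_mul_of_nonneg_right (hα k) hζ.1
    _ = ζ / L := one_div_mul_eq_div L ζ

theorem oblivious_product_extremal_general (L : ℝ) (hL : 0 < L) (t : ℕ)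
    (α : Fin t → ℝ) (hα : ∀ k, 0 ≤ α k ∧ α k ≤ 1 / L) :
    ∃ ζ ∈ Set.Icc (0 : ℝ) L,
      L / (4 * (t + 1)) ≤ ζ * ∏ k, (1 - α k * ζ) := by
  set ζ := L / (2 * (t + 1)) with hζdef
  have hζ : ζ ∈ Set.Icc 0 L :=
    ⟨by positivity, div_le_self hL.le (by linarith [t.cast_nonneg (α := ℝ)])⟩
  have hprod : 1 / 2 ≤ ∏ k, (1 - α k * ζ) := by
    have hbound := one_sub_card_mul_div_le_prod_one_sub_mul hL hζ fun k => (hα k).2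
    have hζL : ζ / L = 1 / (2 * (t + 1)) := by rw [hζdef]; field_simp
    rw [Fintype.card_fin, hζL] at hbound
    have hsmall : (t : ℝ) * (1 / (2 * (t + 1))) ≤ 1 / 2 := by
      rw [mul_one_div, div_le_div_iff₀ (by positivity) two_pos]; linarith
    linarith
  refine ⟨ζ, hζ, ?_⟩
  calc L / (4 * (t + 1)) = ζ * (1 / 2) := by rw [hζdef]; field_simp; ring
    _ ≤ ζ * ∏ k, (1 - α k * ζ) := mul_le_mul_of_nonneg_left hprod hζ.1

theorem oblivious_product_extremal (L : ℝ) (hL : 0 < L) (t : ℕ) (ht : 1 ≤ t)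
    (α : Fin t → ℝ) (hα : ∀ k, 0 ≤ α k ∧ α k ≤ 1 / L) :
    ∃ ζ ∈ Set.Icc (0 : ℝ) L,
      L / (4 * (t + 1)) ≤ ζ * ∏ k, (1 - α k * ζ) :=
  oblivious_product_extremal_general L hL t α hα
end

section
/- Let L > 0 and let p be a real polynomial of degree at most t with p(0) = 1. Then the maximum over ζ ∈ [0, L] of |ζ · p(ζ)| is at least L/(2(t+1)²). -/
/-!
Put `S ζ = ζ * p ζ`, of degree at most `n = t + 1` with `S' 0 = 1`. The affine change of variables
taking `[-1, 1]` onto `[0, L]` with `1 ↦ 0` turns `S` into a polynomial `P` of the same degree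
with `|P' 1| = L / 2`. The endpoint case of Markov's inequality, `|P' 1| ≤ n² max_{[-1,1]} |P|`,
is Mathlib's extremality of Chebyshev polynomials (`P' 1 ≤ T_n' 1 = n²` whenever `|P| ≤ 1` on
`[-1, 1]`), and it gives `L / 2 ≤ n² max_{[0,L]} |S|`.
-/

open Polynomial Set

namespace Polynomial

theorem derivative_eval_one_le_of_forall_abs_le {n : ℕ} {P : ℝ[X]} {M : ℝ}
    (hP : P.natDegree ≤ n) (hM : ∀ x ∈ Icc (-1 : ℝ) 1, |P.eval x| ≤ M) :
    P.derivative.eval 1 ≤ n ^ 2 * M := by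
  rcases (abs_nonneg _).trans (hM 1 (right_mem_Icc.mpr (by norm_num))) |>.eq_or_lt with rfl | hM₀
  · have hroots : (Icc (-1 : ℝ) 1).Infinite := Icc_infinite (by norm_num)
    rw [eq_zero_of_infinite_isRoot P (hroots.mono fun x hx => abs_nonpos_iff.mp (hM x hx))]
    simp
  · have hnormalized : ∀ x ∈ Icc (-1 : ℝ) 1, |(C M⁻¹ * P).eval x| ≤ 1 := fun x hx => by
      rw [eval_mul, eval_C, abs_mul, abs_inv, abs_of_pos hM₀, inv_mul_le_one₀ hM₀]
      exact hM x hx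
    have hdeg : (C M⁻¹ * P).degree ≤ n :=
      degree_le_of_natDegree_le ((natDegree_C_mul_le _ _).trans hP)
    have hchebyshev := Chebyshev.eval_iterate_derivative_le_of_forall_abs_le_one (k := 1)
      le_rfl hdeg hnormalized
    simp only [Function.iterate_one, derivative_C_mul, eval_mul, eval_C,
      Chebyshev.derivative_T_eval_one, Int.cast_natCast] at hchebyshev
    rwa [inv_mul_le_iff₀ hM₀, mul_comm] at hchebyshev

theorem abs_derivative_eval_one_le_of_forall_abs_le {n : ℕ} {P : ℝ[X]} {M : ℝ}
    (hP : P.natDegree ≤ n) (hM : ∀ x ∈ Icc (-1 : ℝ) 1, |P.eval x| ≤ M) :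
    |P.derivative.eval 1| ≤ n ^ 2 * M := by
  have hneg := derivative_eval_one_le_of_forall_abs_le (n := n) (P := -P)
    (by rwa [natDegree_neg]) (by simpa only [eval_neg, abs_neg] using hM)
  rw [derivative_neg, eval_neg] at hneg
  exact abs_le.mpr ⟨by linarith, derivative_eval_one_le_of_forall_abs_le hP hM⟩

theorem abs_derivative_eval_left_le_of_forall_abs_le {n : ℕ} {S : ℝ[X]} {a b M : ℝ}
    (hab : a ≤ b) (hS : S.natDegree ≤ n) (hM : ∀ x ∈ Icc a b, |S.eval x| ≤ M) :
    (b - a) / 2 * |S.derivative.eval a| ≤ n ^ 2 * M := by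
  set q : ℝ[X] := C a + C ((b - a) / 2) * (1 - X)
  have hq_one : q.eval 1 = a := by simp [q]
  have hq_mem : ∀ x ∈ Icc (-1 : ℝ) 1, q.eval x ∈ Icc a b := fun x ⟨h₁, h₂⟩ => by
    simp only [q, eval_add, eval_mul, eval_C, eval_sub, eval_one, eval_X]
    constructor <;> nlinarith
  have hdeg : (S.comp q).natDegree ≤ n := by
    have hq : q.natDegree ≤ 1 := by simp only [q]; compute_degree
    simpa using natDegree_comp_le.trans (Nat.mul_le_mul hS hq)
  have hmarkov := abs_derivative_eval_one_le_of_forall_abs_le hdeg fun x hx => by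
    rw [eval_comp]; exact hM _ (hq_mem x hx)
  rw [derivative_comp, eval_mul, eval_comp, hq_one] at hmarkov
  simpa [q, abs_mul, abs_of_nonneg (by linarith : 0 ≤ (b - a) / 2)] using hmarkov

end Polynomial

theorem markov_universal_lower_bound (L : ℝ) (hL : 0 < L) (t : ℕ)
    (p : Polynomial ℝ) (hdeg : p.natDegree ≤ t) (hp0 : p.eval 0 = 1) :
    ∃ ζ ∈ Set.Icc (0 : ℝ) L,
      L / (2 * (t + 1) ^ 2) ≤ |ζ * p.eval ζ| := by
  set S : ℝ[X] := X * p
  have hS_deg : S.natDegree ≤ t + 1 := natDegree_mul_le.trans (by rw [natDegree_X]; omega)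
  have hS_deriv : S.derivative.eval 0 = 1 := by simp [S, hp0]
  obtain ⟨ζ, hζ, hmax⟩ := isCompact_Icc.exists_isMaxOn (nonempty_Icc.mpr hL.le)
    S.continuous.abs.continuousOn
  refine ⟨ζ, hζ, ?_⟩
  have hmarkov := abs_derivative_eval_left_le_of_forall_abs_le hL.le hS_deg fun x hx => hmax hx
  rw [hS_deriv, abs_one, mul_one, sub_zero] at hmarkov
  have hS_eval : S.eval ζ = ζ * p.eval ζ := by simp [S]
  rw [← hS_eval, div_le_iff₀ (by positivity)]
  push_cast at hmarkov
  linarith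
end

section
/- Let 0 < μ ≤ L and t ∈ ℕ. For any real polynomial p of degree at most t with p(0) = 1, the maximum over ζ ∈ [μ, L] of |p(ζ)| is at least 2/(ρ^t + ρ^{-t}), where ρ = (√κ + 1)/(√κ - 1) and κ = L/μ (assume κ > 1). -/
/-!
If `deg P ≤ n` and `|x| ≥ 1`, then `|P x| ≤ |T_n x| · max_{[-1, 1]} |P|`. Otherwise
`r = T_n(x) • P - P(x) • T_n` vanishes at `x` and, since `T_n = (-1)^i` at the `n + 1` extremal
nodes `cos (iπ/n)` while `|T_n(x) P| < |P(x)|` there, alternates in sign along the nodes; this gives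
`n` more roots in `(-1, 1)`, so `r = 0`, which is absurd at the node `1`.

Transported to `[μ, L]` by the affine map `ζ ↦ (μ + L - 2ζ)/(L - μ)` and evaluated at `ζ = 0`,
this bounds `max_{[μ, L]} |p|` below by `1 / T_t((κ + 1)/(κ - 1))`. Writing
`(κ + 1)/(κ - 1) = cosh θ` with `e^θ = ρ`, we get `T_t (cosh θ) = cosh (tθ) = (ρ^t + ρ^{-t})/2`.
-/

open Polynomial Real Set

namespace Polynomial

theorem exists_isRoot_Ioo_of_eval_mul_eval_neg (r : ℝ[X]) {a b : ℝ} (hab : a ≤ b)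
    (h : r.eval a * r.eval b < 0) : ∃ x ∈ Ioo a b, r.IsRoot x := by
  have hr : ContinuousOn (r.eval ·) (Icc a b) := r.continuous.continuousOn
  rcases mul_neg_iff.mp h with ⟨ha, hb⟩ | ⟨ha, hb⟩
  · exact intermediate_value_Ioo' hab hr ⟨hb, ha⟩
  · exact intermediate_value_Ioo hab hr ⟨ha, hb⟩

theorem eq_zero_of_sign_changes_of_isRoot {n : ℕ} {r : ℝ[X]} (hdeg : r.natDegree ≤ n)
    {x : Fin (n + 1) → ℝ} (hx : StrictAnti x)
    (hsign : ∀ k : Fin n, r.eval (x k.castSucc) * r.eval (x k.succ) < 0)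
    {z : ℝ} (hz : z ∉ Ioo (x (Fin.last n)) (x 0)) (hrz : r.IsRoot z) : r = 0 := by
  have hroot (k : Fin n) : ∃ y ∈ Ioo (x k.succ) (x k.castSucc), r.IsRoot y :=
    r.exists_isRoot_Ioo_of_eval_mul_eval_neg (hx k.castSucc_lt_succ).le
      (by rw [mul_comm]; exact hsign k)
  choose y hy hry using hroot
  have hy_anti : StrictAnti y := fun k j hkj =>
    calc y j < x j.castSucc := (hy j).2
      _ ≤ x k.succ := hx.antitone (Fin.succ_le_castSucc_iff.mpr hkj)
      _ < y k := (hy k).1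
  have hz_notMem : z ∉ range y := by
    rintro ⟨k, rfl⟩
    exact hz ⟨(hx.antitone (Fin.le_last _)).trans_lt (hy k).1,
      (hy k).2.trans_le (hx.antitone (Fin.zero_le _))⟩
  refine eq_zero_of_natDegree_lt_card_of_eval_eq_zero r
    (Fin.cons_injective_iff.mpr ⟨hz_notMem, hy_anti.injective⟩) (fun i => ?_) (by simpa using hdeg)
  cases i using Fin.cases with
  | zero => exact hrz
  | succ k => exact hry k

end Polynomial

theorem sub_mul_neg_one_pow_mul_sub_neg {α : Type*} [CommRing α] [LinearOrder α]
    [IsStrictOrderedRing α] {u v b : α} (hu : |u| < |b|) (hv : |v| < |b|) (k : ℕ) :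
    (u - b * (-1) ^ k) * (v - b * (-1) ^ (k + 1)) < 0 := by
  rw [abs_lt] at hu hv
  rw [pow_succ]
  rcases neg_one_pow_eq_or α k with h | h <;> rw [h] <;>
    rcases abs_cases b with ⟨hb, _⟩ | ⟨hb, _⟩ <;> rw [hb] at hu hv <;> nlinarith

namespace Polynomial.Chebyshev

theorem exists_abs_eval_le_abs_eval_T_mul_abs_eval {n : ℕ} {P : ℝ[X]} (hP : P.natDegree ≤ n)
    {x : ℝ} (hx : x ∉ Ioo (-1) 1) :
    ∃ y ∈ Icc (-1) 1, |P.eval x| ≤ |(T ℝ n).eval x| * |P.eval y| := by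
  by_contra! h
  set r := Polynomial.C ((T ℝ n).eval x) * P - Polynomial.C (P.eval x) * T ℝ n
  have hr_deg : r.natDegree ≤ n := by
    refine (natDegree_sub_le _ _).trans (max_le ?_ ?_)
    · exact (natDegree_C_mul_le _ _).trans hP
    · exact (natDegree_C_mul_le _ _).trans (natDegree_T ℝ n).le
  have hr_node (i : ℕ) (hi : i ≤ n) :
      r.eval (node n i) = (T ℝ n).eval x * P.eval (node n i) - P.eval x * (-1) ^ i := by
    simp [r, eval_T_real_node (Finset.mem_Iic.mpr hi)]
  have hlt (i : ℕ) : |(T ℝ n).eval x * P.eval (node n i)| < |P.eval x| := by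
    rw [abs_mul]; exact h _ node_mem_Icc
  have hr_zero : r = 0 := by
    refine eq_zero_of_sign_changes_of_isRoot hr_deg (x := fun i => node n i)
      (fun i j hij => node_lt j.is_le hij) (fun k => ?_) (z := x) ?_ (by simp [r, mul_comm])
    · simp only [Fin.val_castSucc, Fin.val_succ]
      rw [hr_node _ k.is_lt.le, hr_node _ k.is_lt]
      exact sub_mul_neg_one_pow_mul_sub_neg (hlt _) (hlt _) k
    · rcases eq_or_ne n 0 with rfl | hn
      · simp
      · simpa [node_eq_neg_one hn, node_eq_one] using hx
  have hP1 := hr_node 0 n.zero_le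
  rw [hr_zero, node_eq_one, eval_zero, pow_zero, mul_one, eq_comm, sub_eq_zero] at hP1
  have h1 := hlt 0
  rw [node_eq_one, hP1] at h1
  exact lt_irrefl _ h1

theorem exists_abs_eval_le_abs_eval_T_affine_mul_abs_eval {n : ℕ} {p : ℝ[X]}
    (hp : p.natDegree ≤ n) {a b : ℝ} (hab : a < b) {z : ℝ} (hz : z ∉ Ioo a b) :
    ∃ ζ ∈ Icc a b, |p.eval z| ≤ |(T ℝ n).eval ((a + b - 2 * z) / (b - a))| * |p.eval ζ| := by
  have hba : 0 < b - a := sub_pos.mpr hab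
  set ψ : ℝ[X] := Polynomial.C (-(b - a) / 2) * X + Polynomial.C ((a + b) / 2)
  have hψ (y : ℝ) : ψ.eval y = (a + b - (b - a) * y) / 2 := by simp [ψ]; ring
  have hdeg : (p.comp ψ).natDegree ≤ n := natDegree_comp_le.trans <| by
    nlinarith [natDegree_linear_le (a := -(b - a) / 2) (b := (a + b) / 2)]
  set x := (a + b - 2 * z) / (b - a)
  have hx : x ∉ Ioo (-1) 1 := by
    rintro ⟨h₁, h₂⟩
    rw [lt_div_iff₀ hba] at h₁
    rw [div_lt_iff₀ hba] at h₂
    exact hz ⟨by linarith, by linarith⟩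
  have hψx : ψ.eval x = z := by rw [hψ, mul_div_cancel₀ _ hba.ne']; ring
  obtain ⟨y, ⟨hy₁, hy₂⟩, hle⟩ := exists_abs_eval_le_abs_eval_T_mul_abs_eval hdeg hx
  rw [eval_comp, eval_comp, hψx] at hle
  refine ⟨ψ.eval y, ?_, hle⟩
  rw [hψ]
  constructor <;> nlinarith

theorem eval_T_real_add_one_div_sub_one (n : ℕ) {κ : ℝ} (hκ : 1 < κ) :
    (T ℝ n).eval ((κ + 1) / (κ - 1)) =
      (((√κ + 1) / (√κ - 1)) ^ n + (((√κ + 1) / (√κ - 1)) ^ n)⁻¹) / 2 := by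
  set s := √κ
  have hs : 1 < s := by simpa using Real.sqrt_lt_sqrt zero_le_one hκ
  have hκs : κ = s ^ 2 := (Real.sq_sqrt (by linarith)).symm
  have hρ : 0 < (s + 1) / (s - 1) := div_pos (by linarith) (by linarith)
  have hcosh : (κ + 1) / (κ - 1) = cosh (log ((s + 1) / (s - 1))) := by
    rw [cosh_log hρ, hκs]
    have : s - 1 ≠ 0 := by linarith
    have : s + 1 ≠ 0 := by linarith
    have : s ^ 2 - 1 ≠ 0 := by nlinarith
    field_simp
    ring
  rw [hcosh, T_real_cosh, ← cosh_log (pow_pos hρ n), log_pow]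
  push_cast
  rfl

end Polynomial.Chebyshev

theorem chebyshev_extremal_lower_bound_general (μ L : ℝ) (hμ : 0 < μ)
    (hκ : 1 < L / μ) (t : ℕ) (p : Polynomial ℝ)
    (hdeg : p.natDegree ≤ t) (hp0 : p.eval 0 = 1) :
    ∃ ζ ∈ Set.Icc μ L,
      2 / (((Real.sqrt (L / μ) + 1) / (Real.sqrt (L / μ) - 1)) ^ t
            + (((Real.sqrt (L / μ) + 1) / (Real.sqrt (L / μ) - 1)) ^ t)⁻¹)
        ≤ |p.eval ζ| := by
  have hμL : μ < L := (one_lt_div hμ).mp hκ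
  obtain ⟨ζ, hζ, hle⟩ := Chebyshev.exists_abs_eval_le_abs_eval_T_affine_mul_abs_eval hdeg hμL
    (z := 0) (fun h => hμ.not_gt h.1)
  have hx : (μ + L - 2 * 0) / (L - μ) = (L / μ + 1) / (L / μ - 1) := by
    field_simp
    ring
  have hT : 1 ≤ (Chebyshev.T ℝ t).eval ((L / μ + 1) / (L / μ - 1)) :=
    Chebyshev.one_le_eval_T_real _ ((one_le_div (by linarith)).mpr (by linarith))
  rw [Chebyshev.eval_T_real_add_one_div_sub_one t hκ] at hT
  rw [hx, Chebyshev.eval_T_real_add_one_div_sub_one t hκ, hp0, abs_one,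
    abs_of_pos (by linarith)] at hle
  refine ⟨ζ, hζ, ?_⟩
  rw [div_le_iff₀ (by linarith)]
  linarith

theorem chebyshev_extremal_lower_bound (μ L : ℝ) (hμ : 0 < μ) (hμL : μ ≤ L)
    (hκ : 1 < L / μ) (t : ℕ) (p : Polynomial ℝ)
    (hdeg : p.natDegree ≤ t) (hp0 : p.eval 0 = 1) :
    ∃ ζ ∈ Set.Icc μ L,
      2 / (((Real.sqrt (L / μ) + 1) / (Real.sqrt (L / μ) - 1)) ^ t
            + (((Real.sqrt (L / μ) + 1) / (Real.sqrt (L / μ) - 1)) ^ t)⁻¹)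
        ≤ |p.eval ζ| :=
  chebyshev_extremal_lower_bound_general μ L hμ hκ t p hdeg hp0
end

section
/- Let f_1, ..., f_m : ℝ^d → ℝ be differentiable. If x⋆ is weakly Pareto optimal (i.e., there is no y with f_i(y) < f_i(x⋆) for all i), then the origin lies in the convex hull of {∇f_1(x⋆), ..., ∇f_m(x⋆)}. -/
/-!
If `0` were not in the convex hull of the gradients, a hyperplane would separate it from them:
some direction `w` has `⟪∇f_i(x⋆), w⟫ < 0` for every `i`. Then every `f_i` strictly decreases
along `x⋆ + t • w` for all small `t > 0`, and such a point beats `x⋆` in every objective.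
-/

open Filter Topology RealInnerProductSpace

theorem exists_forall_inner_neg_of_zero_notMem_convexHull {F : Type*} [NormedAddCommGroup F]
    [InnerProductSpace ℝ F] [CompleteSpace F] {s : Set F} (hs : s.Finite)
    (h0 : (0 : F) ∉ convexHull ℝ s) : ∃ w : F, ∀ x ∈ s, ⟪x, w⟫ < 0 := by
  obtain ⟨φ, u, hu, hφ⟩ := geometric_hahn_banach_point_closed (convex_convexHull ℝ s)
    (hs.isCompact_convexHull ℝ).isClosed h0
  set v := (InnerProductSpace.toDual ℝ F).symm φ
  have hv : ∀ x, φ x = ⟪v, x⟫ := fun x => by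
    rw [InnerProductSpace.toDual_symm_apply]
  refine ⟨-v, fun x hx => ?_⟩
  have : u < ⟪v, x⟫ := hv x ▸ hφ x (subset_convexHull ℝ s hx)
  rw [inner_neg_right, real_inner_comm, neg_lt_zero]
  exact (map_zero φ ▸ hu).trans this

theorem HasFDerivAt.eventually_lt_of_apply_neg {E : Type*} [NormedAddCommGroup E]
    [NormedSpace ℝ E] {f : E → ℝ} {f' : E →L[ℝ] ℝ} {x v : E} (hf : HasFDerivAt f f' x)
    (hv : f' v < 0) : ∀ᶠ t in 𝓝[>] (0 : ℝ), f (x + t • v) < f x := by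
  have hslope := (hf.hasLineDerivAt v).tendsto_slope_zero_right
  filter_upwards [hslope.eventually (eventually_lt_nhds hv), self_mem_nhdsWithin]
    with t hneg (ht : 0 < t)
  simpa [smul_eq_mul, mul_neg_iff, ht, not_lt_of_gt ht] using hneg

theorem HasGradientAt.eventually_lt_of_inner_neg {F : Type*} [NormedAddCommGroup F]
    [InnerProductSpace ℝ F] [CompleteSpace F] {f : F → ℝ} {g x v : F} (hf : HasGradientAt f g x)
    (hv : ⟪g, v⟫ < 0) : ∀ᶠ t in 𝓝[>] (0 : ℝ), f (x + t • v) < f x :=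
  hf.hasFDerivAt.eventually_lt_of_apply_neg (by simpa using hv)

theorem weak_pareto_implies_stationary_general {d m : ℕ}
    (f : Fin m → EuclideanSpace ℝ (Fin d) → ℝ)
    (hf : ∀ i, Differentiable ℝ (f i)) (xstar : EuclideanSpace ℝ (Fin d))
    (hweak : ¬ ∃ y, ∀ i, f i y < f i xstar) :
    (0 : EuclideanSpace ℝ (Fin d)) ∈
      convexHull ℝ (Set.range fun i => gradient (f i) xstar) := by
  by_contra h0
  obtain ⟨w, hw⟩ := exists_forall_inner_neg_of_zero_notMem_convexHull (Set.finite_range _) h0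
  have hdescent : ∀ i, ∀ᶠ t in 𝓝[>] (0 : ℝ), f i (xstar + t • w) < f i xstar := fun i =>
    (hf i xstar).hasGradientAt.eventually_lt_of_inner_neg (hw _ ⟨i, rfl⟩)
  obtain ⟨t, ht⟩ := (eventually_all.2 hdescent).exists
  exact hweak ⟨xstar + t • w, ht⟩

theorem weak_pareto_implies_stationary {d m : ℕ} (hm : 0 < m)
    (f : Fin m → EuclideanSpace ℝ (Fin d) → ℝ)
    (hf : ∀ i, Differentiable ℝ (f i)) (xstar : EuclideanSpace ℝ (Fin d))
    (hweak : ¬ ∃ y, ∀ i, f i y < f i xstar) :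
    (0 : EuclideanSpace ℝ (Fin d)) ∈
      convexHull ℝ (Set.range fun i => gradient (f i) xstar) :=
  weak_pareto_implies_stationary_general f hf xstar hweak
end

section
/- Let f_1, ..., f_m : ℝ^d → ℝ be convex and differentiable. For x⋆ ∈ ℝ^d, the following are equivalent: (i) x⋆ is weakly Pareto optimal; (ii) there exists λ in the unit simplex with ∑_i λ_i ∇f_i(x⋆) = 0; (iii) there exists λ in the unit simplex such that x⋆ minimizes f_λ = ∑_i λ_i f_i over ℝ^d. -/
/-!
(iii) ⇒ (i): if some `y` improved every objective strictly, it would strictly improve the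
weighted sum `f_λ`, because the weights are nonnegative and not all zero.
(ii) ⇒ (iii): by convexity `f_i y ≥ f_i x + ⟪∇f_i x, y - x⟫`; weighting by `λ_i` and summing
kills the gradient term.
(i) ⇒ (ii): if `0` is not a convex combination of the gradients, then by Gordan's alternative
(Hahn–Banach separation of `0` from their compact convex hull) there is a direction `v` with
`⟪∇f_i x, v⟫ < 0` for every `i`, and a small step along `v` decreases all objectives at once.
-/

open Filter Topology Set

def IsWeakParetoOptimal {ι α β : Type*} [LT β] (f : ι → α → β) (x : α) : Prop :=
  ¬ ∃ y, ∀ i, f i y < f i x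

section LineDeriv

variable {E : Type*} [AddCommGroup E] [Module ℝ E] {f : E → ℝ} {f' : ℝ} {x v : E}

theorem ConvexOn.add_le_of_hasLineDerivAt (hf : ConvexOn ℝ univ f) {y : E}
    (h : HasLineDerivAt ℝ f f' x (y - x)) : f x + f' ≤ f y := by
  have hline : (fun t : ℝ ↦ f (x + t • (y - x))) = f ∘ AffineMap.lineMap x y := by
    ext t
    simp [AffineMap.lineMap_apply, add_comm]
  have hconv : ConvexOn ℝ univ fun t : ℝ ↦ f (x + t • (y - x)) := by
    rw [hline]
    simpa using hf.comp_affineMap (AffineMap.lineMap x y)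
  have := hconv.le_slope_of_hasDerivAt (mem_univ 0) (mem_univ 1) one_pos h
  simp only [slope, sub_zero, inv_one, one_smul, zero_smul, add_zero, add_sub_cancel,
    vsub_eq_sub] at this
  linarith

theorem HasLineDerivAt.eventually_lt_of_neg (h : HasLineDerivAt ℝ f f' x v) (hf' : f' < 0) :
    ∀ᶠ t in 𝓝[>] (0 : ℝ), f (x + t • v) < f x := by
  filter_upwards [h.tendsto_slope_zero_right.eventually_lt_const hf', self_mem_nhdsWithin]
    with t hslope (ht : 0 < t)
  simp only [smul_eq_mul] at hslope
  exact sub_neg.mp (neg_of_mul_neg_right hslope (inv_nonneg.mpr ht.le))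

end LineDeriv

theorem sum_mul_lt_sum_mul_of_mem_stdSimplex {ι : Type*} [Fintype ι] {lam a b : ι → ℝ}
    (hlam : lam ∈ stdSimplex ℝ ι) (hab : ∀ i, a i < b i) :
    ∑ i, lam i * a i < ∑ i, lam i * b i := by
  obtain ⟨j, -, hj⟩ : ∃ j ∈ Finset.univ, (0 : ι → ℝ) j < lam j :=
    Finset.exists_lt_of_sum_lt (by simp [hlam.2])
  exact Finset.sum_lt_sum (fun i _ ↦ mul_le_mul_of_nonneg_left (hab i).le (hlam.1 i))
    ⟨j, Finset.mem_univ j, mul_lt_mul_of_pos_left (hab j) hj⟩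

theorem exists_strongDual_forall_neg_of_forall_sum_smul_ne_zero
    {E : Type*} [AddCommGroup E] [Module ℝ E] [TopologicalSpace E] [IsTopologicalAddGroup E]
    [ContinuousSMul ℝ E] [LocallyConvexSpace ℝ E] [T2Space E] {ι : Type*} [Fintype ι]
    (g : ι → E) (h : ∀ lam ∈ stdSimplex ℝ ι, ∑ i, lam i • g i ≠ 0) :
    ∃ φ : StrongDual ℝ E, ∀ i, φ (g i) < 0 := by
  classical
  set L := Fintype.linearCombination ℝ g
  have hS : 0 ∉ L '' stdSimplex ℝ ι := by
    rintro ⟨lam, hlam, hzero⟩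
    exact h lam hlam (by rwa [Fintype.linearCombination_apply] at hzero)
  obtain ⟨φ, u, hφ, hu⟩ := geometric_hahn_banach_closed_point
    ((convex_stdSimplex ℝ ι).linear_image L)
    ((isCompact_stdSimplex ℝ ι).image L.continuous_of_finiteDimensional).isClosed hS
  have hg : ∀ i, g i ∈ L '' stdSimplex ℝ ι := fun i ↦
    ⟨Pi.single i 1, single_mem_stdSimplex ℝ i, by simp [L]⟩
  exact ⟨φ, fun i ↦ (hφ _ (hg i)).trans (by simpa using hu)⟩

theorem isWeakParetoOptimal_of_forall_sum_mul_le {ι α : Type*} [Fintype ι] {f : ι → α → ℝ}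
    {x : α} {lam : ι → ℝ} (hlam : lam ∈ stdSimplex ℝ ι)
    (hmin : ∀ y, ∑ i, lam i * f i x ≤ ∑ i, lam i * f i y) :
    IsWeakParetoOptimal f x :=
  fun ⟨y, hy⟩ ↦ (sum_mul_lt_sum_mul_of_mem_stdSimplex hlam hy).not_ge (hmin y)

section Pareto

variable {ι E : Type*} [Fintype ι] [NormedAddCommGroup E] [InnerProductSpace ℝ E]
  [CompleteSpace E] {f : ι → E → ℝ} {x : E} {lam : ι → ℝ}

theorem sum_mul_le_sum_mul_of_sum_smul_gradient_eq_zero (hconv : ∀ i, ConvexOn ℝ univ (f i))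
    (hdiff : ∀ i, DifferentiableAt ℝ (f i) x) (hlam : ∀ i, 0 ≤ lam i)
    (hzero : ∑ i, lam i • gradient (f i) x = 0) (y : E) :
    ∑ i, lam i * f i x ≤ ∑ i, lam i * f i y := by
  have hterm : ∀ i,
      lam i * f i x + lam i * inner ℝ (gradient (f i) x) (y - x) ≤ lam i * f i y := by
    intro i
    rw [← mul_add, inner_gradient_left]
    exact mul_le_mul_of_nonneg_left
      ((hconv i).add_le_of_hasLineDerivAt ((hdiff i).hasFDerivAt.hasLineDerivAt _)) (hlam i)
  have hinner : ∑ i, lam i * inner ℝ (gradient (f i) x) (y - x) = 0 := by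
    simp_rw [← real_inner_smul_left, ← sum_inner, hzero, inner_zero_left]
  calc ∑ i, lam i * f i x
      = ∑ i, (lam i * f i x + lam i * inner ℝ (gradient (f i) x) (y - x)) := by
        rw [Finset.sum_add_distrib, hinner, add_zero]
    _ ≤ ∑ i, lam i * f i y := Finset.sum_le_sum fun i _ ↦ hterm i

theorem IsWeakParetoOptimal.exists_sum_smul_gradient_eq_zero
    (hdiff : ∀ i, DifferentiableAt ℝ (f i) x) (hx : IsWeakParetoOptimal f x) :
    ∃ lam ∈ stdSimplex ℝ ι, ∑ i, lam i • gradient (f i) x = 0 := by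
  by_contra! h
  obtain ⟨φ, hφ⟩ := exists_strongDual_forall_neg_of_forall_sum_smul_ne_zero _ h
  set v := (InnerProductSpace.toDual ℝ E).symm φ
  have hdescent : ∀ i, fderiv ℝ (f i) x v < 0 := fun i ↦ by
    rw [← inner_gradient_left, real_inner_comm, InnerProductSpace.toDual_symm_apply]
    exact hφ i
  obtain ⟨t, ht⟩ := (eventually_all.mpr fun i ↦
    ((hdiff i).hasFDerivAt.hasLineDerivAt v).eventually_lt_of_neg (hdescent i)).exists
  exact hx ⟨x + t • v, ht⟩

end Pareto

theorem convex_weak_pareto_characterization_general {d m : ℕ}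
    (f : Fin m → EuclideanSpace ℝ (Fin d) → ℝ)
    (hconv : ∀ i, ConvexOn ℝ Set.univ (f i))
    (hdiff : ∀ i, Differentiable ℝ (f i)) (xstar : EuclideanSpace ℝ (Fin d)) :
    ((¬ ∃ y, ∀ i, f i y < f i xstar)
      ↔ ∃ lam : Fin m → ℝ, (∀ i, 0 ≤ lam i) ∧ (∑ i, lam i = 1) ∧
          ∑ i, lam i • gradient (f i) xstar = 0) ∧
    ((¬ ∃ y, ∀ i, f i y < f i xstar)
      ↔ ∃ lam : Fin m → ℝ, (∀ i, 0 ≤ lam i) ∧ (∑ i, lam i = 1) ∧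
          ∀ y, ∑ i, lam i * f i xstar ≤ ∑ i, lam i * f i y) := by
  have hdiffAt : ∀ i, DifferentiableAt ℝ (f i) xstar := fun i ↦ hdiff i xstar
  have stationary_of_optimal (hx : IsWeakParetoOptimal f xstar) :
      ∃ lam : Fin m → ℝ, (∀ i, 0 ≤ lam i) ∧ (∑ i, lam i = 1) ∧
        ∑ i, lam i • gradient (f i) xstar = 0 := by
    obtain ⟨lam, ⟨hnonneg, hsum⟩, hzero⟩ := hx.exists_sum_smul_gradient_eq_zero hdiffAt
    exact ⟨lam, hnonneg, hsum, hzero⟩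
  refine ⟨⟨stationary_of_optimal, ?_⟩, ⟨fun hx ↦ ?_, ?_⟩⟩
  · rintro ⟨lam, hnonneg, hsum, hzero⟩
    exact isWeakParetoOptimal_of_forall_sum_mul_le ⟨hnonneg, hsum⟩
      (sum_mul_le_sum_mul_of_sum_smul_gradient_eq_zero hconv hdiffAt hnonneg hzero)
  · obtain ⟨lam, hnonneg, hsum, hzero⟩ := stationary_of_optimal hx
    exact ⟨lam, hnonneg, hsum, sum_mul_le_sum_mul_of_sum_smul_gradient_eq_zero hconv hdiffAt
      hnonneg hzero⟩
  · rintro ⟨lam, hnonneg, hsum, hmin⟩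
    exact isWeakParetoOptimal_of_forall_sum_mul_le ⟨hnonneg, hsum⟩ hmin

theorem convex_weak_pareto_characterization {d m : ℕ} (hm : 0 < m)
    (f : Fin m → EuclideanSpace ℝ (Fin d) → ℝ)
    (hconv : ∀ i, ConvexOn ℝ Set.univ (f i))
    (hdiff : ∀ i, Differentiable ℝ (f i)) (xstar : EuclideanSpace ℝ (Fin d)) :
    ((¬ ∃ y, ∀ i, f i y < f i xstar)
      ↔ ∃ lam : Fin m → ℝ, (∀ i, 0 ≤ lam i) ∧ (∑ i, lam i = 1) ∧
          ∑ i, lam i • gradient (f i) xstar = 0) ∧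
    ((¬ ∃ y, ∀ i, f i y < f i xstar)
      ↔ ∃ lam : Fin m → ℝ, (∀ i, 0 ≤ lam i) ∧ (∑ i, lam i = 1) ∧
          ∀ y, ∑ i, lam i * f i xstar ≤ ∑ i, lam i * f i y) :=
  convex_weak_pareto_characterization_general f hconv hdiff xstar
end

section
/- Fix L > 0, μ with 0 < μ ≤ L, κ = L/μ > 1, T ≥ 1, and R > 0. For any family of real polynomials p_T of degree at most T with p_T(0) = 1, there exists a symmetric positive definite matrix H with spectrum in [μ, L] and a vector e with ‖e‖ = R such that ‖H p_T(H) e‖ ≥ μ R ((√κ - 1)/(√κ + 1))^T. -/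
/-!
Substituting `x = c - r (u + u⁻¹)` with `c = (L + μ)/2`, `r = (L - μ)/4` maps the unit circle onto
`[μ, L]`, and `u^T p(c - r (u + u⁻¹))` is a polynomial in `u` when `deg p ≤ T`. By the maximum
modulus principle its value at `ρ = (√κ - 1)/(√κ + 1)`, which lies in the unit disc and is sent to
`x = 0`, is at most `max_{[μ, L]} |p|`; since `p(0) = 1` that value is `ρ^T`. A `1 × 1` matrix
`H = x₀` at a maximiser `x₀ ≥ μ` then gives `‖H p(H) e‖ = x₀ |p(x₀)| R ≥ μ R ρ^T`.
-/

open Polynomial Set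

lemma Complex.aeval_ofReal (p : ℝ[X]) (x : ℝ) : aeval (x : ℂ) p = ((p.eval x : ℝ) : ℂ) :=
  aeval_algebraMap_apply_eq_algebraMap_eval x p

noncomputable def joukowskiNumerator (p : ℝ[X]) (c r : ℂ) (T : ℕ) (u : ℂ) : ℂ :=
  ∑ k ∈ Finset.range (T + 1), (p.coeff k : ℂ) * u ^ (T - k) * (c * u - r * u ^ 2 - r) ^ k

section joukowskiNumerator

variable {p : ℝ[X]} {T : ℕ}

lemma joukowskiNumerator_eq (hdeg : p.natDegree ≤ T) (c r : ℂ) {u : ℂ} (hu : u ≠ 0) :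
    joukowskiNumerator p c r T u = u ^ T * aeval (c - r * (u + u⁻¹)) p := by
  rw [aeval_eq_sum_range' (Nat.lt_succ_of_le hdeg), Finset.mul_sum]
  refine Finset.sum_congr rfl fun k hk => ?_
  have hkT : k ≤ T := Nat.lt_succ_iff.mp (Finset.mem_range.mp hk)
  rw [show c - r * (u + u⁻¹) = (c * u - r * u ^ 2 - r) / u by field_simp; ring, div_pow,
    ← pow_sub_mul_pow u hkT, Complex.real_smul]
  field_simp

lemma differentiable_joukowskiNumerator (c r : ℂ) :
    Differentiable ℂ (joukowskiNumerator p c r T) := by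
  unfold joukowskiNumerator
  fun_prop

lemma sub_mul_add_inv_eq_ofReal_of_norm_eq_one (c r : ℝ) {u : ℂ} (hu : ‖u‖ = 1) :
    (c : ℂ) - r * (u + u⁻¹) = ((c - 2 * r * u.re : ℝ) : ℂ) := by
  rw [Complex.inv_eq_conj hu, Complex.add_conj]
  push_cast
  ring

lemma norm_joukowskiNumerator_le (hdeg : p.natDegree ≤ T) {c r M : ℝ} (hr : 0 ≤ r)
    (hM : ∀ x ∈ Icc (c - 2 * r) (c + 2 * r), |p.eval x| ≤ M) {u : ℂ} (hu : ‖u‖ < 1) :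
    ‖joukowskiNumerator p c r T u‖ ≤ M := by
  refine Complex.norm_le_of_forall_mem_frontier_norm_le Metric.isBounded_ball
    (differentiable_joukowskiNumerator _ _).diffContOnCl (fun z hz => ?_)
    (subset_closure (mem_ball_zero_iff.mpr hu))
  rw [frontier_ball 0 one_ne_zero, mem_sphere_zero_iff_norm] at hz
  have hz0 : z ≠ 0 := norm_ne_zero_iff.mp (hz.symm ▸ one_ne_zero)
  have hre : |z.re| ≤ 1 := hz ▸ Complex.abs_re_le_norm z
  rw [joukowskiNumerator_eq hdeg _ _ hz0, sub_mul_add_inv_eq_ofReal_of_norm_eq_one c r hz, Complex.aeval_ofReal,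
    norm_mul, norm_pow, hz, one_pow, one_mul, Complex.norm_real, Real.norm_eq_abs]
  refine hM _ ⟨?_, ?_⟩ <;> nlinarith [abs_le.mp hre]

end joukowskiNumerator

noncomputable def chebyshevRatio (κ : ℝ) : ℝ := (√κ - 1) / (√κ + 1)

lemma chebyshevRatio_pos {κ : ℝ} (hκ : 1 < κ) : 0 < chebyshevRatio κ :=
  div_pos (sub_pos.mpr ((Real.lt_sqrt zero_le_one).mpr (by rwa [one_pow]))) (by positivity)

lemma chebyshevRatio_lt_one (κ : ℝ) : chebyshevRatio κ < 1 :=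
  (div_lt_one (by positivity)).mpr (by linarith)

lemma joukowski_chebyshevRatio_eq_zero {μ L : ℝ} (hμ : 0 < μ) (hμL : μ < L) :
    (L + μ) / 2 - (L - μ) / 4 * (chebyshevRatio (L / μ) + (chebyshevRatio (L / μ))⁻¹) = 0 := by
  have hs : 1 < √(L / μ) := (Real.lt_sqrt zero_le_one).mpr (by rwa [one_pow, one_lt_div hμ])
  have hs2 : √(L / μ) ^ 2 * μ = L := by
    rw [Real.sq_sqrt (div_nonneg (by linarith) hμ.le), div_mul_cancel₀ _ hμ.ne']
  have hs1 : √(L / μ) - 1 ≠ 0 := by linarith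
  unfold chebyshevRatio
  field_simp
  linear_combination 8 * hs2

/-- The extremal property of Chebyshev polynomials, in the form of a lower bound. -/
theorem exists_mem_Icc_chebyshevRatio_pow_le_abs_eval {μ L : ℝ} (hμ : 0 < μ) (hμL : μ < L)
    {p : ℝ[X]} {T : ℕ} (hdeg : p.natDegree ≤ T) (hp0 : p.eval 0 = 1) :
    ∃ x ∈ Icc μ L, chebyshevRatio (L / μ) ^ T ≤ |p.eval x| := by
  obtain ⟨x₀, hx₀, hmax⟩ := isCompact_Icc.exists_isMaxOn (nonempty_Icc.mpr hμL.le)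
    (continuous_abs.comp p.continuous).continuousOn
  refine ⟨x₀, hx₀, ?_⟩
  set ρ := chebyshevRatio (L / μ)
  have hρ0 : 0 < ρ := chebyshevRatio_pos ((one_lt_div hμ).mpr hμL)
  have hbound := norm_joukowskiNumerator_le hdeg (c := (L + μ) / 2) (r := (L - μ) / 4)
    (M := |p.eval x₀|) (by linarith) (fun x hx => hmax (by convert hx using 2 <;> ring))
    (u := ρ) (by rw [Complex.norm_real, Real.norm_of_nonneg hρ0.le]; exact chebyshevRatio_lt_one _)
  rwa [joukowskiNumerator_eq hdeg _ _ (Complex.ofReal_ne_zero.mpr hρ0.ne'),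
    show ((((L + μ) / 2 : ℝ) : ℂ) - (((L - μ) / 4 : ℝ) : ℂ) * ((ρ : ℂ) + (ρ : ℂ)⁻¹))
      = ((0 : ℝ) : ℂ) by exact_mod_cast joukowski_chebyshevRatio_eq_zero hμ hμL,
    Complex.aeval_ofReal, hp0, Complex.ofReal_one, mul_one, norm_pow, Complex.norm_real,
    Real.norm_of_nonneg hρ0.le] at hbound

lemma Matrix.posDef_algebraMap {n : Type*} [Fintype n] [DecidableEq n] {x : ℝ} (hx : 0 < x) :
    (algebraMap ℝ (Matrix n n ℝ) x).PosDef := by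
  rw [Algebra.algebraMap_eq_smul_one]
  exact Matrix.PosDef.one.smul hx

lemma Matrix.toEuclideanCLM_algebraMap_apply {n : Type*} [Fintype n] [DecidableEq n] (x : ℝ)
    (v : EuclideanSpace ℝ n) :
    Matrix.toEuclideanCLM (𝕜 := ℝ) (algebraMap ℝ (Matrix n n ℝ) x) v = x • v := by
  rw [AlgHomClass.commutes, ContinuousLinearMap.algebraMap_apply]

theorem strongly_convex_lower_bound_general (L μ R : ℝ) (T : ℕ)
    (hμ : 0 < μ) (hκ : 1 < L / μ) (hR : 0 < R)
    (p : Polynomial ℝ) (hdeg : p.natDegree ≤ T) (hp0 : p.eval 0 = 1) :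
    ∃ (d : ℕ) (H : Matrix (Fin d) (Fin d) ℝ), H.PosDef ∧
      spectrum ℝ H ⊆ Set.Icc μ L ∧
      ∃ e : EuclideanSpace ℝ (Fin d), ‖e‖ = R ∧
        μ * R * ((Real.sqrt (L / μ) - 1) / (Real.sqrt (L / μ) + 1)) ^ T
          ≤ ‖Matrix.toEuclideanCLM (𝕜 := ℝ) (H * Polynomial.aeval H p) e‖ := by
  obtain ⟨x, hx, hbound⟩ :=
    exists_mem_Icc_chebyshevRatio_pow_le_abs_eval hμ ((one_lt_div hμ).mp hκ) hdeg hp0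
  have hx0 : 0 < x := hμ.trans_le hx.1
  have hnorm : ‖EuclideanSpace.single (0 : Fin 1) R‖ = R := by
    rw [PiLp.norm_single, Real.norm_of_nonneg hR.le]
  refine ⟨1, algebraMap ℝ _ x, Matrix.posDef_algebraMap hx0,
    (spectrum.scalar_eq x).subset.trans (singleton_subset_iff.mpr hx),
    EuclideanSpace.single 0 R, hnorm, ?_⟩
  rw [aeval_algebraMap_apply_eq_algebraMap_eval, ← map_mul,
    Matrix.toEuclideanCLM_algebraMap_apply, norm_smul, hnorm, Real.norm_eq_abs, abs_mul,
    abs_of_pos hx0, mul_right_comm]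
  have hμx : μ * chebyshevRatio (L / μ) ^ T ≤ x * |p.eval x| :=
    (mul_le_mul_of_nonneg_left hbound hμ.le).trans (mul_le_mul_of_nonneg_right hx.1 (abs_nonneg _))
  exact mul_le_mul_of_nonneg_right hμx hR.le

theorem strongly_convex_lower_bound (L μ R : ℝ) (T : ℕ)
    (hμ : 0 < μ) (hμL : μ ≤ L) (hκ : 1 < L / μ) (hT : 1 ≤ T) (hR : 0 < R)
    (p : Polynomial ℝ) (hdeg : p.natDegree ≤ T) (hp0 : p.eval 0 = 1) :
    ∃ (d : ℕ) (H : Matrix (Fin d) (Fin d) ℝ), H.PosDef ∧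
      spectrum ℝ H ⊆ Set.Icc μ L ∧
      ∃ e : EuclideanSpace ℝ (Fin d), ‖e‖ = R ∧
        μ * R * ((Real.sqrt (L / μ) - 1) / (Real.sqrt (L / μ) + 1)) ^ T
          ≤ ‖Matrix.toEuclideanCLM (𝕜 := ℝ) (H * Polynomial.aeval H p) e‖ :=
  strongly_convex_lower_bound_general L μ R T hμ hκ hR p hdeg hp0
end

section
/- Let g : V → ℝ be differentiable on a finite-dimensional inner product space V, let W be another finite-dimensional inner product space, let a_1, ..., a_m ∈ W, let γ > 0, and define f_i(x_V, x_W) = g(x_V) + (γ/2)‖x_W - a_i‖² on V × W. Then for every x = (x_V, x_W), the squared Pareto stationarity gap satisfies G(x)² = ‖∇g(x_V)‖² + γ² · dist(x_W, conv{a_1,...,a_m})², and in particular G(x) ≥ ‖∇g(x_V)‖. -/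
/-!
Each `fᵢ` has gradient `(∇g(x_V), γ (x_W - aᵢ))` in the `L²` product `V × W`, so a convex
combination with weights `λ` has gradient `(∇g(x_V), γ (x_W - ∑ λᵢ aᵢ))`, whose squared norm is
`‖∇g(x_V)‖² + γ² dist(x_W, ∑ λᵢ aᵢ)²`. As `λ` ranges over the simplex, `∑ λᵢ aᵢ` ranges over the
convex hull of the `aᵢ`; this hull is compact, so the distance from `x_W` to it is attained.
-/

open Set Metric WithLp

theorem hasGradientAt_half_mul_norm_sub_sq {F : Type*} [NormedAddCommGroup F]
    [InnerProductSpace ℝ F] [CompleteSpace F] (γ : ℝ) (a w : F) :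
    HasGradientAt (fun y => γ / 2 * ‖y - a‖ ^ 2) (γ • (w - a)) w := by
  rw [hasGradientAt_iff_hasFDerivAt]
  refine (((hasFDerivAt_id w).sub_const a).norm_sq.const_mul (γ / 2)).congr_fderiv ?_
  ext v
  simp
  ring

theorem HasGradientAt.withLp_prod_add {E F : Type*} [NormedAddCommGroup E]
    [InnerProductSpace ℝ E] [CompleteSpace E] [NormedAddCommGroup F] [InnerProductSpace ℝ F]
    [CompleteSpace F] {φ : E → ℝ} {ψ : F → ℝ} {u : E} {v : F} {z : WithLp 2 (E × F)}
    (hφ : HasGradientAt φ u z.fst) (hψ : HasGradientAt ψ v z.snd) :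
    HasGradientAt (fun z : WithLp 2 (E × F) => φ z.fst + ψ z.snd) (toLp 2 (u, v)) z := by
  rw [hasGradientAt_iff_hasFDerivAt] at *
  refine ((hφ.comp z (fstL 2 ℝ E F).hasFDerivAt).add
    (hψ.comp z (sndL 2 ℝ E F).hasFDerivAt)).congr_fderiv ?_
  ext y
  simp [prod_inner_apply]

theorem Finset.sum_smul_sub_eq_sub_sum_smul {ι E : Type*} [AddCommGroup E] [Module ℝ E]
    {s : Finset ι} {w : ι → ℝ} (hw : ∑ i ∈ s, w i = 1) (x : E) (a : ι → E) :
    ∑ i ∈ s, w i • (x - a i) = x - ∑ i ∈ s, w i • a i := by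
  simp only [smul_sub, Finset.sum_sub_distrib, ← Finset.sum_smul, hw, one_smul]

theorem WithLp.sum_smul_toLp_const_smul_sub {ι E F : Type*} [AddCommGroup E] [Module ℝ E]
    [AddCommGroup F] [Module ℝ F] {s : Finset ι} {w : ι → ℝ} (hw : ∑ i ∈ s, w i = 1)
    (u : E) (γ : ℝ) (x : F) (a : ι → F) :
    ∑ i ∈ s, w i • toLp 2 (u, γ • (x - a i)) = toLp 2 (u, γ • (x - ∑ i ∈ s, w i • a i)) := by
  simp only [← toLp_smul, ← toLp_sum]
  congr 1
  ext
  · simp only [Prod.fst_sum, Prod.smul_mk, ← Finset.sum_smul, hw, one_smul]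
  · simp only [Prod.snd_sum, Prod.smul_mk, smul_comm (w _) γ, ← Finset.smul_sum,
      Finset.sum_smul_sub_eq_sub_sum_smul hw]

theorem WithLp.norm_toLp_smul_sub {E F : Type*} [NormedAddCommGroup E] [NormedAddCommGroup F]
    [NormedSpace ℝ F] (u : E) (γ : ℝ) (x y : F) :
    ‖toLp 2 (u, γ • (x - y))‖ = √(‖u‖ ^ 2 + γ ^ 2 * dist x y ^ 2) := by
  rw [prod_norm_eq_of_L2, toLp_fst, toLp_snd, norm_smul, mul_pow, Real.norm_eq_abs, sq_abs,
    dist_eq_norm]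

theorem convexHull_range_eq_image_stdSimplex {ι E : Type*} [Fintype ι] [AddCommGroup E]
    [Module ℝ E] (a : ι → E) :
    convexHull ℝ (range a) = (fun w => ∑ i, w i • a i) '' stdSimplex ℝ ι := by
  classical
  have hlin : (fun w : ι → ℝ => ∑ i, w i • a i) = Fintype.linearCombination ℝ a := by
    ext w
    simp [Fintype.linearCombination_apply]
  rw [hlin, ← convexHull_rangle_single_eq_stdSimplex, LinearMap.image_convexHull, ← range_comp]
  congr 2
  ext i
  simp [Fintype.linearCombination_apply, Pi.single_apply]

theorem IsCompact.sInf_image_dist_eq {α : Type*} [PseudoMetricSpace α] {S : Set α}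
    (hS : IsCompact S) (hne : S.Nonempty) {h : ℝ → ℝ} (hh : MonotoneOn h (Ici 0)) (x : α) :
    sInf ((fun y => h (dist x y)) '' S) = h (infDist x S) := by
  obtain ⟨y₀, hy₀, hd⟩ := hS.exists_infDist_eq_dist hne x
  refine IsLeast.csInf_eq ⟨⟨y₀, hy₀, by rw [hd]⟩, ?_⟩
  rintro _ ⟨y, hy, rfl⟩
  exact hh infDist_nonneg dist_nonneg (infDist_le_dist_of_mem hy)

theorem pareto_gap_decomposition_general
    {V W : Type*} [NormedAddCommGroup V] [InnerProductSpace ℝ V] [FiniteDimensional ℝ V]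
    [NormedAddCommGroup W] [InnerProductSpace ℝ W] [FiniteDimensional ℝ W]
    {m : ℕ} (hm : 0 < m) (γ : ℝ)
    (g : V → ℝ) (hg : Differentiable ℝ g) (a : Fin m → W)
    (f : Fin m → WithLp 2 (V × W) → ℝ)
    (hf : ∀ i z, f i z = g z.fst + γ / 2 * ‖z.snd - a i‖ ^ 2)
    (G : WithLp 2 (V × W) → ℝ)
    (hG : ∀ z, G z = sInf {r : ℝ | ∃ lam : Fin m → ℝ,
      (∀ i, 0 ≤ lam i) ∧ (∑ i, lam i = 1) ∧
      r = ‖∑ i, lam i • gradient (f i) z‖})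
    (x : WithLp 2 (V × W)) :
    G x ^ 2 = ‖gradient g x.fst‖ ^ 2
        + γ ^ 2 * (Metric.infDist x.snd (convexHull ℝ (Set.range a))) ^ 2
      ∧ ‖gradient g x.fst‖ ≤ G x := by
  set c := gradient g x.fst
  let h : ℝ → ℝ := fun t => √(‖c‖ ^ 2 + γ ^ 2 * t ^ 2)
  have hgrad (i : Fin m) : gradient (f i) x = toLp 2 (c, γ • (x.snd - a i)) := by
    rw [show f i = _ from funext (hf i)]
    exact ((hg x.fst).hasGradientAt.withLp_prod_add
      (hasGradientAt_half_mul_norm_sub_sq γ (a i) x.snd)).gradient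
  have hvalues : {r : ℝ | ∃ lam : Fin m → ℝ, (∀ i, 0 ≤ lam i) ∧ (∑ i, lam i = 1) ∧
      r = ‖∑ i, lam i • gradient (f i) x‖} =
      (fun y => h (dist x.snd y)) '' convexHull ℝ (range a) := by
    rw [convexHull_range_eq_image_stdSimplex, image_image]
    ext r
    simp only [hgrad, mem_ofPred_eq, mem_image, stdSimplex, eq_comm (a := r)]
    constructor
    · rintro ⟨lam, hlam₀, hlam₁, rfl⟩
      exact ⟨lam, ⟨hlam₀, hlam₁⟩, by rw [sum_smul_toLp_const_smul_sub hlam₁, norm_toLp_smul_sub]⟩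
    · rintro ⟨lam, ⟨hlam₀, hlam₁⟩, rfl⟩
      exact ⟨lam, hlam₀, hlam₁, by rw [sum_smul_toLp_const_smul_sub hlam₁, norm_toLp_smul_sub]⟩
  have hmono : MonotoneOn h (Ici 0) := fun s hs t _ hst => by
    simp only [h]
    gcongr
  have hGx : G x = h (infDist x.snd (convexHull ℝ (range a))) := by
    rw [hG, hvalues, ((finite_range a).isCompact_convexHull ℝ).sInf_image_dist_eq
      ((range_nonempty_iff_nonempty.2 ⟨⟨0, hm⟩⟩).convexHull) hmono]
  rw [hGx]
  exact ⟨Real.sq_sqrt (by positivity),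
    Real.le_sqrt_of_sq_le (le_add_of_nonneg_right (by positivity))⟩

theorem pareto_gap_decomposition
    {V W : Type*} [NormedAddCommGroup V] [InnerProductSpace ℝ V] [FiniteDimensional ℝ V]
    [NormedAddCommGroup W] [InnerProductSpace ℝ W] [FiniteDimensional ℝ W]
    {m : ℕ} (hm : 0 < m) (γ : ℝ) (hγ : 0 < γ)
    (g : V → ℝ) (hg : Differentiable ℝ g) (a : Fin m → W)
    (f : Fin m → WithLp 2 (V × W) → ℝ)
    (hf : ∀ i z, f i z = g z.fst + γ / 2 * ‖z.snd - a i‖ ^ 2)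
    (G : WithLp 2 (V × W) → ℝ)
    (hG : ∀ z, G z = sInf {r : ℝ | ∃ lam : Fin m → ℝ,
      (∀ i, 0 ≤ lam i) ∧ (∑ i, lam i = 1) ∧
      r = ‖∑ i, lam i • gradient (f i) z‖})
    (x : WithLp 2 (V × W)) :
    G x ^ 2 = ‖gradient g x.fst‖ ^ 2
        + γ ^ 2 * (Metric.infDist x.snd (convexHull ℝ (Set.range a))) ^ 2
      ∧ ‖gradient g x.fst‖ ≤ G x :=
  pareto_gap_decomposition_general hm γ g hg a f hf G hG x
end
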